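/- arXiv:1207.4018 — 4 statements merged into one kernel-verified Lean document; each statement's English description precedes it below -/
import Mathlib

section
/- Let F(r) = (1+r)·log(1+r) + (1−r)·log(1−r) − λ·r^2 on (−1,1) with λ ≥ 1. Then F'(s)·s ≥ F(s) − C_F for all s ∈ (−1,1), for some constant C_F > 0 depending only on λ. -/
/-!
The entropy terms of `F'(s) s - F(s)` collapse to `-log (1 - s²) ≥ 0`, so
`F'(s) s - F(s) ≥ -λ s² ≥ -λ` on `(-1, 1)` and `C_F = λ` works.
-/

/-- The logarithmic (singular) potential with parameter `lam`. -/
noncomputable def logPotential (lam : ℝ) : ℝ → ℝ :=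
  fun r => (1 + r) * Real.log (1 + r) + (1 - r) * Real.log (1 - r) - lam * r ^ 2

/-- Its derivative `F'(s) = log(1+s) - log(1-s) - 2λs`. -/
noncomputable def logPotential' (lam : ℝ) : ℝ → ℝ :=
  fun s => Real.log (1 + s) - Real.log (1 - s) - 2 * lam * s

open Real Set

theorem logPotential'_mul_sub_logPotential (lam s : ℝ) :
    logPotential' lam s * s - logPotential lam s =
      -(log (1 + s) + log (1 - s)) - lam * s ^ 2 := by
  simp only [logPotential, logPotential']
  ring

theorem log_one_add_add_log_one_sub_nonpos {s : ℝ} (hs : s ∈ Ioo (-1 : ℝ) 1) :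
    log (1 + s) + log (1 - s) ≤ 0 := by
  obtain ⟨hs₁, hs₂⟩ := hs
  rw [← log_mul (by linarith) (by linarith)]
  exact log_nonpos (by nlinarith) (by nlinarith [sq_nonneg s])

/-- for the logarithmic potential with `λ ≥ 1` there exists `C_F > 0`
(depending only on `λ`) such that `F'(s)·s ≥ F(s) - C_F` for all `s ∈ (-1,1)`. -/
theorem logPotential_deriv_mul_ge :
    ∀ lam : ℝ, 1 ≤ lam → ∃ C_F : ℝ, 0 < C_F ∧
      ∀ s ∈ Set.Ioo (-1 : ℝ) 1, logPotential lam s - C_F ≤ logPotential' lam s * s := by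
  intro lam hlam
  refine ⟨lam, by linarith, fun s hs => ?_⟩
  have hlog := log_one_add_add_log_one_sub_nonpos hs
  have hquad : lam * s ^ 2 ≤ lam := by
    have : s ^ 2 ≤ 1 := by nlinarith [hs.1, hs.2]
    nlinarith
  linarith [logPotential'_mul_sub_logPotential lam s]
end

section
/- Let (x_k)_{k≥0} be a sequence of nonnegative real numbers and suppose there exist constants C ≥ 1, σ > 0, M ≥ 1 such that x_k ≤ C·(2^k)^σ·x_{k−1}^2 for all k ≥ 1 and x_0 ≤ M. Then x_k^{1/2^k} ≤ C^{A_k/2^k}·2^{σ B_k/2^k}·M where A_k = ∑_{i=0}^{k−1} 2^i and B_k = ∑_{i=0}^{k−1} 2^i·(k−i); consequently limsup_{k→∞} x_k^{1/2^k} ≤ C^2·2^{2σ}·M. -/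
/-!
Squaring the recursion `k` times bounds `x_k` by `C ^ A_k * (2 ^ σ) ^ B_k * M ^ 2 ^ k`, where the
exponents obey `A_{k+1} = 2 A_k + 1` and `B_{k+1} = 2 B_k + (k + 1)`. Taking the `2 ^ k`-th root
gives the first claim, and the closed forms `A_k = 2 ^ k - 1`, `B_k = 2 ^ (k + 1) - (k + 2)` show
`A_k / 2 ^ k, B_k / 2 ^ k ≤ 2`, which bounds every term, hence the limsup.
-/

open Finset Filter

namespace AlikakosMoser

def A (k : ℕ) : ℕ := ∑ i ∈ range k, 2 ^ i

def B (k : ℕ) : ℕ := ∑ i ∈ range k, 2 ^ i * (k - i)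

theorem A_succ (k : ℕ) : A (k + 1) = 2 * A k + 1 := by
  simp only [A, sum_range_succ', pow_succ, mul_sum, pow_zero]
  simp_rw [mul_comm]

theorem B_succ (k : ℕ) : B (k + 1) = 2 * B k + (k + 1) := by
  simp only [B, sum_range_succ', pow_succ, mul_sum, pow_zero, Nat.add_sub_add_right, one_mul,
    Nat.sub_zero]
  congr 1
  exact sum_congr rfl fun i _ => by ring

theorem A_add_one (k : ℕ) : A k + 1 = 2 ^ k := by
  induction k with
  | zero => simp [A]
  | succ k ih => rw [A_succ, pow_succ, ← ih]; ring

theorem B_add (k : ℕ) : B k + (k + 2) = 2 ^ (k + 1) := by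
  induction k with
  | zero => simp [B]
  | succ k ih => rw [B_succ, pow_succ, ← ih]; ring

theorem A_le_two_mul_two_pow (k : ℕ) : A k ≤ 2 * 2 ^ k := by
  have := A_add_one k
  omega

theorem B_le_two_mul_two_pow (k : ℕ) : B k ≤ 2 * 2 ^ k := by
  have := B_add k
  rw [pow_succ] at this
  omega

theorem cast_A (k : ℕ) : (A k : ℝ) = ∑ i ∈ range k, (2 : ℝ) ^ i := by
  push_cast [A]
  rfl

theorem cast_B (k : ℕ) : (B k : ℝ) = ∑ i ∈ range k, (2 : ℝ) ^ i * ((k - i : ℕ) : ℝ) := by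
  push_cast [B]
  rfl

theorem le_pow_A_mul_pow_B {R : Type*} [CommSemiring R] [PartialOrder R] [IsOrderedRing R]
    {x : ℕ → R} {C D M : R} (hx : ∀ k, 0 ≤ x k) (hC : 0 ≤ C) (hD : 0 ≤ D) (h0 : x 0 ≤ M)
    (hrec : ∀ k, x (k + 1) ≤ C * D ^ (k + 1) * x k ^ 2) (k : ℕ) :
    x k ≤ C ^ A k * D ^ B k * M ^ 2 ^ k := by
  induction k with
  | zero => simpa [A, B] using h0
  | succ k ih =>
    calc x (k + 1) ≤ C * D ^ (k + 1) * x k ^ 2 := hrec k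
      _ ≤ C * D ^ (k + 1) * (C ^ A k * D ^ B k * M ^ 2 ^ k) ^ 2 := by
        gcongr
        exact hx k
      _ = C ^ A (k + 1) * D ^ B (k + 1) * M ^ 2 ^ (k + 1) := by
        rw [A_succ, B_succ]; ring

theorem cast_div_two_pow_le {n : ℕ} (k : ℕ) (h : n ≤ 2 * 2 ^ k) : (n : ℝ) / 2 ^ k ≤ 2 := by
  rw [div_le_iff₀ (by positivity)]
  exact_mod_cast h

theorem rpow_one_div_two_pow_le {x C D M : ℝ} {a b k : ℕ} (hx : 0 ≤ x) (hC : 0 ≤ C) (hD : 0 ≤ D)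
    (hM : 0 ≤ M) (h : x ≤ C ^ a * D ^ b * M ^ 2 ^ k) :
    x ^ ((1 : ℝ) / 2 ^ k) ≤ C ^ ((a : ℝ) / 2 ^ k) * D ^ ((b : ℝ) / 2 ^ k) * M := by
  have hroot : (1 : ℝ) / 2 ^ k = ((2 ^ k : ℕ) : ℝ)⁻¹ := by push_cast; exact one_div _
  calc x ^ ((1 : ℝ) / 2 ^ k) ≤ (C ^ a * D ^ b * M ^ 2 ^ k) ^ ((1 : ℝ) / 2 ^ k) :=
        Real.rpow_le_rpow hx h (by positivity)
    _ = C ^ ((a : ℝ) / 2 ^ k) * D ^ ((b : ℝ) / 2 ^ k) * M := by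
      rw [Real.mul_rpow (by positivity) (by positivity), Real.mul_rpow (by positivity) (by positivity),
        ← Real.rpow_natCast_mul hC, ← Real.rpow_natCast_mul hD, mul_one_div, mul_one_div, hroot,
        Real.pow_rpow_inv_natCast hM (by positivity)]

end AlikakosMoser

open AlikakosMoser

theorem alikakos_moser_iteration_general
    (x : ℕ → ℝ) (C σ M : ℝ) (hx : ∀ k, 0 ≤ x k) (hC : 1 ≤ C) (hσ : 0 < σ)
    (h0 : x 0 ≤ M)
    (hrec : ∀ k : ℕ, 1 ≤ k → x k ≤ C * ((2 : ℝ) ^ k) ^ σ * x (k - 1) ^ 2) :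
    (∀ k : ℕ,
      x k ^ ((1 : ℝ) / 2 ^ k) ≤
        C ^ ((∑ i ∈ Finset.range k, (2 : ℝ) ^ i) / 2 ^ k) *
          (2 : ℝ) ^ (σ * (∑ i ∈ Finset.range k, (2 : ℝ) ^ i * ((k - i : ℕ) : ℝ)) / 2 ^ k) *
          M) ∧
    Filter.limsup (fun k : ℕ => x k ^ ((1 : ℝ) / 2 ^ k)) Filter.atTop ≤
      C ^ (2 : ℝ) * (2 : ℝ) ^ (2 * σ) * M := by
  have hM : 0 ≤ M := (hx 0).trans h0
  have hrec' (k : ℕ) : x (k + 1) ≤ C * ((2 : ℝ) ^ σ) ^ (k + 1) * x k ^ 2 := by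
    rw [Real.rpow_pow_comm zero_le_two]
    exact hrec (k + 1) k.succ_pos
  have hroot (k : ℕ) :
      x k ^ ((1 : ℝ) / 2 ^ k) ≤ C ^ ((A k : ℝ) / 2 ^ k) * (2 : ℝ) ^ (σ * B k / 2 ^ k) * M := by
    rw [mul_div_assoc, Real.rpow_mul zero_le_two]
    exact rpow_one_div_two_pow_le (hx k) (by positivity) (by positivity) hM
      (le_pow_A_mul_pow_B hx (by positivity) (by positivity) h0 hrec' k)
  refine ⟨fun k => by simpa only [cast_A, cast_B] using hroot k, ?_⟩
  refine limsup_le_of_le (isCoboundedUnder_le_of_le atTop fun k => Real.rpow_nonneg (hx k) _)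
    (Eventually.of_forall fun k => (hroot k).trans ?_)
  gcongr
  · exact cast_div_two_pow_le k (A_le_two_mul_two_pow k)
  · exact one_le_two
  · rw [mul_div_assoc, mul_comm]
    exact mul_le_mul_of_nonneg_right (cast_div_two_pow_le k (B_le_two_mul_two_pow k)) hσ.le

/-- abstract Alikakos–Moser iteration. If `x_k ≥ 0`, `x_0 ≤ M`, and
`x_k ≤ C (2^k)^σ x_{k-1}²` for `k ≥ 1` (with `C ≥ 1`, `σ > 0`, `M ≥ 1`), then
`x_k^{1/2^k} ≤ C^{A_k/2^k} 2^{σ B_k/2^k} M` where `A_k = ∑_{i<k} 2^i`,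
`B_k = ∑_{i<k} 2^i (k-i)`; consequently
`limsup_k x_k^{1/2^k} ≤ C² 2^{2σ} M`. -/
theorem alikakos_moser_iteration
    (x : ℕ → ℝ) (C σ M : ℝ) (hx : ∀ k, 0 ≤ x k) (hC : 1 ≤ C) (hσ : 0 < σ) (hM : 1 ≤ M)
    (h0 : x 0 ≤ M)
    (hrec : ∀ k : ℕ, 1 ≤ k → x k ≤ C * ((2 : ℝ) ^ k) ^ σ * x (k - 1) ^ 2) :
    (∀ k : ℕ,
      x k ^ ((1 : ℝ) / 2 ^ k) ≤
        C ^ ((∑ i ∈ Finset.range k, (2 : ℝ) ^ i) / 2 ^ k) *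
          (2 : ℝ) ^ (σ * (∑ i ∈ Finset.range k, (2 : ℝ) ^ i * ((k - i : ℕ) : ℝ)) / 2 ^ k) *
          M) ∧
    Filter.limsup (fun k : ℕ => x k ^ ((1 : ℝ) / 2 ^ k)) Filter.atTop ≤
      C ^ (2 : ℝ) * (2 : ℝ) ^ (2 * σ) * M :=
  alikakos_moser_iteration_general x C σ M hx hC hσ h0 hrec
end

section
/- Suppose f : [0, ∞) → [0, ∞) is measurable with f ∈ L^2(0, ∞) and there exist constants C > 0 and θ ∈ (0, 1/2] such that ∫_t^∞ f(s)^2 ds ≤ C·f(t)^{1/(1−θ)} for almost every t in a measurable set M ⊆ (0,∞). Then f ∈ L^1(M), i.e. ∫_M f(s) ds < ∞. -/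
/-!
With `p = 1 / (1 - θ) > 1`, split the part of `M` where the decay estimate holds into the dyadic
level sets `A n = {2⁻ⁿ / 2 < f ≤ 2⁻ⁿ}`. Every tail `∫_t^∞ f²` with `t ∈ A n` is at most
`C 2^(-n p)`, and a set whose points all have tails below a bound has `∫ f²` below that bound
(approximate its infimum from inside). Since `f² > 4⁻ⁿ / 4` on `A n`, this gives
`∫_{A n} f ≤ 2⁻ⁿ |A n| ≤ 4 C (2^(1 - p))ⁿ`, a convergent geometric series. Where `f > 1`,
`f ≤ f²` is integrable.
-/

open MeasureTheory Set Filter Topology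
open scoped ENNReal

section InfimumApproximation

variable {α : Type*} [ConditionallyCompleteLinearOrder α] [TopologicalSpace α] [OrderTopology α]
  [FirstCountableTopology α] [MeasurableSpace α] {μ : Measure α} [NullSingletonClass μ]
  {S : Set α} {c : ℝ≥0∞}

theorem measure_le_of_forall_measure_Ioi_le (hS : BddBelow S) (h : ∀ t ∈ S, μ (Ioi t) ≤ c) :
    μ S ≤ c := by
  rcases S.eq_empty_or_nonempty with rfl | hne
  · simp
  obtain ⟨u, hu_anti, -, hu_lim, hu_mem⟩ := (isGLB_csInf hne hS).exists_seq_antitone_tendsto hne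
  have hcover : Ioi (sInf S) ⊆ ⋃ n, Ioi (u n) := fun x hx =>
    mem_iUnion.2 (hu_lim.eventually (gt_mem_nhds hx)).exists
  calc μ S ≤ μ (Ici (sInf S)) := measure_mono fun x hx => csInf_le hS hx
    _ = μ (Ioi (sInf S)) := measure_congr Ioi_ae_eq_Ici.symm
    _ ≤ μ (⋃ n, Ioi (u n)) := measure_mono hcover
    _ = ⨆ n, μ (Ioi (u n)) := Monotone.measure_iUnion fun m n hmn => Ioi_subset_Ioi (hu_anti hmn)
    _ ≤ c := iSup_le fun n => h _ (hu_mem n)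

theorem setLIntegral_le_of_forall_setLIntegral_Ioi_le [SFinite μ] {g : α → ℝ≥0∞}
    (hS : BddBelow S) (h : ∀ t ∈ S, ∫⁻ s in Ioi t, g s ∂μ ≤ c) : ∫⁻ s in S, g s ∂μ ≤ c := by
  simp only [← withDensity_apply'] at h ⊢
  exact measure_le_of_forall_measure_Ioi_le hS h

end InfimumApproximation

theorem setLIntegral_ofReal_le_of_sq_le {f : ℝ → ℝ} (hf : Measurable f) {A : Set ℝ} {a d : ℝ}
    (ha : 0 < a) (hfA : ∀ t ∈ A, a / 2 < f t ∧ f t ≤ a)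
    (hA : ∫⁻ t in A, ENNReal.ofReal (f t ^ 2) ≤ ENNReal.ofReal d) :
    ∫⁻ t in A, ENNReal.ofReal (f t) ≤ ENNReal.ofReal (4 * d / a) := by
  have hb : 0 < (a / 2) ^ 2 := by positivity
  have hvol : volume A ≤ ENNReal.ofReal (d / (a / 2) ^ 2) := by
    rw [ENNReal.ofReal_div_of_pos hb, ENNReal.le_div_iff_mul_le (by simp [ha.ne']) (by simp),
      mul_comm]
    calc ENNReal.ofReal ((a / 2) ^ 2) * volume A
        = ∫⁻ _ in A, ENNReal.ofReal ((a / 2) ^ 2) := (setLIntegral_const _ _).symm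
      _ ≤ ∫⁻ t in A, ENNReal.ofReal (f t ^ 2) :=
          setLIntegral_mono (hf.pow_const 2).ennreal_ofReal fun t ht =>
            ENNReal.ofReal_le_ofReal (pow_le_pow_left₀ (by positivity) (hfA t ht).1.le 2)
      _ ≤ ENNReal.ofReal d := hA
  calc ∫⁻ t in A, ENNReal.ofReal (f t)
      ≤ ∫⁻ _ in A, ENNReal.ofReal a := setLIntegral_mono measurable_const fun t ht =>
          ENNReal.ofReal_le_ofReal (hfA t ht).2
    _ = ENNReal.ofReal a * volume A := setLIntegral_const _ _
    _ ≤ ENNReal.ofReal a * ENNReal.ofReal (d / (a / 2) ^ 2) := by gcongr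
    _ = ENNReal.ofReal (4 * d / a) := by
        rw [← ENNReal.ofReal_mul ha.le]
        congr 1
        field_simp
        ring

section TailDecay

variable {f : ℝ → ℝ} {S : Set ℝ} {C p : ℝ}

theorem setLIntegral_ofReal_band_le (hf : Measurable f) (hS : BddBelow S) (hC : 0 ≤ C)
    (hp : 0 ≤ p)
    (htail : ∀ t ∈ S, ∫⁻ s in Ioi t, ENNReal.ofReal (f s ^ 2) ≤ ENNReal.ofReal (C * f t ^ p))
    {a : ℝ} (ha : 0 < a) :
    ∫⁻ t in {t ∈ S | a / 2 < f t ∧ f t ≤ a}, ENNReal.ofReal (f t) ≤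
      ENNReal.ofReal (4 * C * a ^ (p - 1)) := by
  have hband := setLIntegral_ofReal_le_of_sq_le hf (d := C * a ^ p) ha (fun t ht => ht.2) <|
    setLIntegral_le_of_forall_setLIntegral_Ioi_le (hS.mono (sep_subset _ _)) fun t ht =>
      (htail t ht.1).trans <| ENNReal.ofReal_le_ofReal <|
        mul_le_mul_of_nonneg_left (Real.rpow_le_rpow (by linarith [ht.2.1]) ht.2.2 hp) hC
  refine hband.trans_eq (congrArg ENNReal.ofReal ?_)
  rw [Real.rpow_sub_one ha.ne']
  ring

theorem setLIntegral_ofReal_lt_top_of_tail_sq_le (hf : Measurable f) (hf0 : ∀ t, 0 ≤ f t)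
    (hS : BddBelow S) (hS2 : ∫⁻ t in S, ENNReal.ofReal (f t ^ 2) < ∞) (hC : 0 ≤ C) (hp : 1 < p)
    (htail : ∀ t ∈ S, ∫⁻ s in Ioi t, ENNReal.ofReal (f s ^ 2) ≤ ENNReal.ofReal (C * f t ^ p)) :
    ∫⁻ t in S, ENNReal.ofReal (f t) < ∞ := by
  set band : ℕ → Set ℝ := fun n => {t ∈ S | (1 / 2 : ℝ) ^ n / 2 < f t ∧ f t ≤ (1 / 2) ^ n}
  set ρ : ℝ := (1 / 2) ^ (p - 1) with hρ_def
  have hρ : ρ < 1 := Real.rpow_lt_one (by norm_num) (by norm_num) (by linarith)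
  have hcover : S ⊆ {t | f t = 0} ∪ ({t ∈ S | 1 < f t} ∪ ⋃ n, band n) := by
    intro t ht
    rcases (hf0 t).eq_or_lt with h0 | h0
    · exact Or.inl h0.symm
    rcases lt_or_ge 1 (f t) with h1 | h1
    · exact Or.inr (Or.inl ⟨ht, h1⟩)
    obtain ⟨n, hn⟩ := exists_nat_pow_near_of_lt_one h0 h1 (by norm_num : (0 : ℝ) < 1 / 2)
      (by norm_num)
    refine Or.inr (Or.inr (mem_iUnion.2 ⟨n, ht, ?_, hn.2⟩))
    rw [pow_succ] at hn
    linarith [hn.1]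
  have hzero : ∫⁻ t in {t | f t = 0}, ENNReal.ofReal (f t) = 0 := by
    have hmeas : MeasurableSet {t | f t = 0} := hf (measurableSet_singleton 0)
    rw [setLIntegral_congr_fun hmeas fun t (ht : f t = 0) => by rw [ht, ENNReal.ofReal_zero],
      lintegral_zero]
  have hlarge : ∫⁻ t in {t ∈ S | 1 < f t}, ENNReal.ofReal (f t) ≤
      ∫⁻ t in S, ENNReal.ofReal (f t ^ 2) :=
    (setLIntegral_mono (hf.pow_const 2).ennreal_ofReal fun t ht =>
      ENNReal.ofReal_le_ofReal (by nlinarith [ht.2])).trans (lintegral_mono_set (sep_subset _ _))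
  have hband : ∀ n, ∫⁻ t in band n, ENNReal.ofReal (f t) ≤ ENNReal.ofReal (4 * C * ρ ^ n) :=
    fun n => by
      rw [hρ_def, Real.rpow_pow_comm (by norm_num)]
      exact setLIntegral_ofReal_band_le hf hS hC (by linarith) htail (by positivity)
  have hsum : ∑' n, ENNReal.ofReal (4 * C * ρ ^ n) < ∞ := by
    rw [← ENNReal.ofReal_tsum_of_nonneg (fun n => by positivity)
      ((summable_geometric_of_lt_one (by positivity) hρ).mul_left _)]
    exact ENNReal.ofReal_lt_top
  calc ∫⁻ t in S, ENNReal.ofReal (f t)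
      ≤ ∫⁻ t in {t | f t = 0} ∪ ({t ∈ S | 1 < f t} ∪ ⋃ n, band n), ENNReal.ofReal (f t) :=
        lintegral_mono_set hcover
    _ ≤ 0 + ((∫⁻ t in S, ENNReal.ofReal (f t ^ 2)) + ∑' n, ENNReal.ofReal (4 * C * ρ ^ n)) := by
        refine (lintegral_union_le _ _ _).trans (add_le_add hzero.le ?_)
        refine (lintegral_union_le _ _ _).trans (add_le_add hlarge ?_)
        exact (lintegral_iUnion_le _ _).trans (ENNReal.tsum_le_tsum hband)
    _ < ∞ := by
        rw [zero_add]
        exact ENNReal.add_lt_top.2 ⟨hS2, hsum⟩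

end TailDecay

theorem integrability_from_lojasiewicz_decay_general
    (f : ℝ → ℝ) (hf_meas : Measurable f) (hf_nonneg : ∀ t, 0 ≤ f t)
    (hf_L2 : IntegrableOn (fun s => f s ^ 2) (Set.Ioi 0))
    (M : Set ℝ) (hMsub : M ⊆ Set.Ioi 0)
    (C θ : ℝ) (hC : 0 < C) (hθ : θ ∈ Set.Ioc (0 : ℝ) (1 / 2))
    (hdecay : ∀ᵐ t ∂volume.restrict M,
      (∫ s in Set.Ioi t, f s ^ 2) ≤ C * f t ^ ((1 : ℝ) / (1 - θ))) :
    IntegrableOn f M := by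
  have hp : 1 < (1 : ℝ) / (1 - θ) := one_lt_one_div (by linarith [hθ.2]) (by linarith [hθ.1])
  set G := {t ∈ M | (∫ s in Ioi t, f s ^ 2) ≤ C * f t ^ ((1 : ℝ) / (1 - θ))}
  have hGM : G =ᵐ[volume] M := by
    filter_upwards [ae_imp_of_ae_restrict hdecay] with t ht
    exact propext ⟨fun h => h.1, fun h => ⟨h, ht h⟩⟩
  have hG0 : G ⊆ Ioi 0 := (sep_subset _ _).trans hMsub
  have htail : ∀ t ∈ G, ∫⁻ s in Ioi t, ENNReal.ofReal (f s ^ 2) ≤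
      ENNReal.ofReal (C * f t ^ ((1 : ℝ) / (1 - θ))) := fun t ht => by
    rw [← ofReal_integral_eq_lintegral_ofReal (hf_L2.mono_set (Ioi_subset_Ioi (hG0 ht).le))
      (ae_of_all _ fun s => sq_nonneg _)]
    exact ENNReal.ofReal_le_ofReal ht.2
  rw [← integrableOn_congr_set_ae hGM]
  refine ⟨hf_meas.aestronglyMeasurable, (hasFiniteIntegral_iff_ofReal (ae_of_all _ hf_nonneg)).2 ?_⟩
  exact setLIntegral_ofReal_lt_top_of_tail_sq_le hf_meas hf_nonneg ⟨0, fun t ht => (hG0 ht).le⟩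
    ((lintegral_mono_set hG0).trans_lt hf_L2.lintegral_lt_top) hC.le hp htail

/-- abstract integrability lemma. If `f ≥ 0` is measurable with
`f ∈ L²(0,∞)` and `∫_t^∞ f(s)² ds ≤ C f(t)^{1/(1-θ)}` for a.e. `t` in a measurable
set `M ⊆ (0,∞)`, where `C > 0` and `θ ∈ (0, 1/2]`, then `f ∈ L¹(M)`. -/
theorem integrability_from_lojasiewicz_decay
    (f : ℝ → ℝ) (hf_meas : Measurable f) (hf_nonneg : ∀ t, 0 ≤ f t)
    (hf_L2 : IntegrableOn (fun s => f s ^ 2) (Set.Ioi 0))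
    (M : Set ℝ) (hM : MeasurableSet M) (hMsub : M ⊆ Set.Ioi 0)
    (C θ : ℝ) (hC : 0 < C) (hθ : θ ∈ Set.Ioc (0 : ℝ) (1 / 2))
    (hdecay : ∀ᵐ t ∂volume.restrict M,
      (∫ s in Set.Ioi t, f s ^ 2) ≤ C * f t ^ ((1 : ℝ) / (1 - θ))) :
    IntegrableOn f M :=
  integrability_from_lojasiewicz_decay_general f hf_meas hf_nonneg hf_L2 M hMsub C θ hC hθ hdecay
end

section
/- Let g : (−1, 1) → ℝ be continuous with g(s) → +∞ as s → 1⁻ and g(s) → −∞ as s → −1⁺, and let h : [τ, ∞) → ℝ be bounded with sup |h| ≤ R. Consider a C¹ solution y : [τ, ∞) → (−1, 1) of α·y'(t) + g(y(t)) = h(t) with α > 0. Then there exists δ ∈ (0, 1), depending only on g, R, α, and |y(τ)| ≤ 1 − δ̄ for some δ̄ > 0, such that |y(t)| ≤ 1 − δ for all t ≥ τ. -/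
/-!
Since `g → +∞` at `1⁻`, there is a level `c < 1`, as close to `1` as we like, with `g c > R ≥ h`;
whenever the solution touches `c` the equation forces `α y' = h - g c < 0`, so `y` can never cross
`c` upwards. Applying the same barrier to `-y` (using `g → -∞` at `-1⁺`) bounds `y` from below.
-/

open Filter Topology

theorem le_of_hasDerivAt_neg_of_eq {y y' : ℝ → ℝ} {τ c : ℝ}
    (hy : ∀ t, τ ≤ t → HasDerivAt y (y' t) t) (h₀ : y τ ≤ c)
    (hc : ∀ t, τ ≤ t → y t = c → y' t < 0) :
    ∀ t, τ ≤ t → y t ≤ c := fun t ht =>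
  image_le_of_deriv_right_lt_deriv_boundary' (b := t) (B := fun _ => c) (B' := 0)
    (fun s hs => (hy s hs.1).continuousAt.continuousWithinAt)
    (fun s hs => (hy s hs.1).hasDerivWithinAt) h₀ continuousOn_const
    (fun _ _ => hasDerivWithinAt_const _ _ _) (fun s hs => hc s hs.1) ⟨ht, le_rfl⟩

theorem le_of_ode_of_forcing_lt {g h y y' : ℝ → ℝ} {α τ c : ℝ} (hα : 0 < α)
    (hh : ∀ t, τ ≤ t → h t < g c) (hy : ∀ t, τ ≤ t → HasDerivAt y (y' t) t)
    (hode : ∀ t, τ ≤ t → α * y' t + g (y t) = h t) (h₀ : y τ ≤ c) :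
    ∀ t, τ ≤ t → y t ≤ c := by
  refine le_of_hasDerivAt_neg_of_eq hy h₀ fun t ht hyt => ?_
  have hneg : α * y' t < 0 := by linarith [hode t ht, hh t ht, congrArg g hyt]
  exact neg_of_mul_neg_right hneg hα.le

theorem ode_comparison_separation_general
    (g : ℝ → ℝ)
    (hgtop : Tendsto g (nhdsWithin 1 (Set.Iio 1)) atTop)
    (hgbot : Tendsto g (nhdsWithin (-1) (Set.Ioi (-1))) atBot)
    (α R τ δbar : ℝ) (hα : 0 < α) (hδbar : 0 < δbar) :
    ∃ δ ∈ Set.Ioo (0 : ℝ) 1,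
      ∀ h y y' : ℝ → ℝ,
        (∀ t, τ ≤ t → |h t| ≤ R) →
        (∀ t, τ ≤ t → y t ∈ Set.Ioo (-1 : ℝ) 1) →
        (∀ t, τ ≤ t → HasDerivAt y (y' t) t) →
        (∀ t, τ ≤ t → α * y' t + g (y t) = h t) →
        |y τ| ≤ 1 - δbar →
        ∀ t, τ ≤ t → |y t| ≤ 1 - δ := by
  have hupper : ∀ᶠ c in 𝓝[<] 1, R < g c := hgtop.eventually (eventually_gt_atTop R)
  have hlower : ∀ᶠ c in 𝓝[<] (1 : ℝ), R < -g (-c) :=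
    (tendsto_neg_atBot_atTop.comp (hgbot.comp tendsto_neg_nhdsLT)).eventually
      (eventually_gt_atTop R)
  obtain ⟨c, ⟨hgc, hgc'⟩, hc_lo, hc_hi⟩ :=
    ((hupper.and hlower).and (Ioo_mem_nhdsLT (max_lt (sub_lt_self 1 hδbar) one_pos))).exists
  have hc_δbar : 1 - δbar ≤ c := (le_max_left _ _).trans hc_lo.le
  refine ⟨1 - c, ⟨by linarith, by linarith [le_max_right (1 - δbar) 0]⟩,
    fun h y y' hh _ hy hode h₀ t ht => abs_le.mpr ⟨?_, ?_⟩⟩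
  · have hbelow : -y t ≤ c :=
      le_of_ode_of_forcing_lt (g := fun s => -g (-s)) (h := -h) (y := -y) (y' := -y') hα
        (fun s hs => show -h s < -g (-c) by linarith [neg_abs_le (h s), hh s hs])
        (fun s hs => (hy s hs).neg)
        (fun s hs => by simp only [Pi.neg_apply, neg_neg]; linarith [hode s hs])
        (show -y τ ≤ c by linarith [neg_abs_le (y τ)]) t ht
    linarith
  · have habove : y t ≤ c :=
      le_of_ode_of_forcing_lt hα (fun s hs => by linarith [le_abs_self (h s), hh s hs]) hy hode
        (by linarith [le_abs_self (y τ)]) t ht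
    linarith

/-- scalar comparison principle behind the separation property. Let
`g : (-1,1) → ℝ` be continuous with `g(s) → +∞` as `s → 1⁻` and `g(s) → -∞` as
`s → -1⁺`, let `α > 0`, `R ≥ 0`, and `δ̄ > 0`. Then there exists `δ ∈ (0,1)`
(depending only on `g, R, α, δ̄`) such that: for every bounded forcing `h` with
`|h| ≤ R` on `[τ,∞)` and every `C¹` solution `y : [τ,∞) → (-1,1)` of
`α y' + g(y) = h` with `|y(τ)| ≤ 1 - δ̄`, one has `|y(t)| ≤ 1 - δ` for all `t ≥ τ`. -/
theorem ode_comparison_separation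
    (g : ℝ → ℝ) (hg : ContinuousOn g (Set.Ioo (-1 : ℝ) 1))
    (hgtop : Tendsto g (nhdsWithin 1 (Set.Iio 1)) atTop)
    (hgbot : Tendsto g (nhdsWithin (-1) (Set.Ioi (-1))) atBot)
    (α R τ δbar : ℝ) (hα : 0 < α) (hR : 0 ≤ R) (hδbar : 0 < δbar) :
    ∃ δ ∈ Set.Ioo (0 : ℝ) 1,
      ∀ h y y' : ℝ → ℝ,
        (∀ t, τ ≤ t → |h t| ≤ R) →
        (∀ t, τ ≤ t → y t ∈ Set.Ioo (-1 : ℝ) 1) →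
        (∀ t, τ ≤ t → HasDerivAt y (y' t) t) →
        (∀ t, τ ≤ t → α * y' t + g (y t) = h t) →
        |y τ| ≤ 1 - δbar →
        ∀ t, τ ≤ t → |y t| ≤ 1 - δ :=
  ode_comparison_separation_general g hgtop hgbot α R τ δbar hα hδbar
end
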